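/- Every Banff quiver admits a reddening sequence. (Abstract version: suppose R is a class of quivers such that (a) every acyclic quiver is in R, (b) R is closed under mutation equivalence, (c) R is closed under passing to induced subquivers, and (d) R is closed under triangular extensions. Then every Banff quiver is in R.) -/

import Mathlib

/-- A quiver (finite directed multigraph without loops or 2-cycles), encoded as a
skew-symmetric integer matrix `B` on a finite vertex set: `B i j` is the number of
arrows `i → j` minus the number of arrows `j → i`. -/
structure Quiv where
  V : Type
  [fin : Fintype V]
  B : V → V → ℤ
  skew : ∀ i j, B i j = -(B j i)

attribute [instance] Quiv.fin

namespace Quiv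

lemma sign_mul_max (a b : ℤ) :
    a.sign * max (a * b) 0 = b.sign * max (b * a) 0 := by
  rcases lt_trichotomy (a * b) 0 with h | h | h
  · rw [max_eq_right h.le, mul_comm b a, max_eq_right h.le, mul_zero, mul_zero]
  · simp [h, mul_comm b a]
  · have h' : 0 < b * a := by rwa [mul_comm]
    rw [max_eq_left h.le, max_eq_left h'.le, mul_comm b a]
    rcases mul_pos_iff.mp h with ⟨ha, hb⟩ | ⟨ha, hb⟩
    · rw [Int.sign_eq_one_of_pos ha, Int.sign_eq_one_of_pos hb]
    · rw [Int.sign_eq_neg_one_of_neg ha, Int.sign_eq_neg_one_of_neg hb]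

open Classical in
/-- Quiver mutation at the vertex `i`. -/
noncomputable def mutate (Q : Quiv) (i : Q.V) : Quiv where
  V := Q.V
  fin := Q.fin
  B := fun j k =>
    if j = i ∨ k = i then -(Q.B j k)
    else Q.B j k + (Q.B j i).sign * max (Q.B j i * Q.B i k) 0
  skew := by
    intro j k
    try dsimp only
    by_cases h : j = i ∨ k = i
    · rw [if_pos h, if_pos (Or.symm h), Q.skew j k]
    · have h' : ¬(k = i ∨ j = i) := fun hc => h (Or.symm hc)
      rw [if_neg h, if_neg h', Q.skew k j, Q.skew k i, Q.skew i j]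
      have hm : (-(Q.B i k)) * (-(Q.B j i)) = Q.B i k * Q.B j i := by ring
      rw [hm, Int.sign_neg, sign_mul_max (Q.B j i) (Q.B i k)]
      ring

/-- `Arrow Q i j` means there is an arrow from `i` to `j`. -/
def Arrow (Q : Quiv) (i j : Q.V) : Prop := 0 < Q.B i j

/-- A quiver is acyclic if it has no directed cycles. -/
def Acyclic (Q : Quiv) : Prop := ∀ v, ¬ Relation.TransGen Q.Arrow v v

def IsSource (Q : Quiv) (i : Q.V) : Prop := ∀ j, ¬ Q.Arrow j i

def IsSink (Q : Quiv) (j : Q.V) : Prop := ∀ k, ¬ Q.Arrow j k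

/-- The induced subquiver on a subset `S` of the vertices. -/
noncomputable def restrict (Q : Quiv) (S : Set Q.V) : Quiv where
  V := S
  fin := Fintype.ofFinite S
  B := fun a b => Q.B a b
  skew := fun a b => Q.skew a b

/-- Deletion of the vertex `i` (induced subquiver on the complement). -/
noncomputable def delete (Q : Quiv) (i : Q.V) : Quiv := Q.restrict {v | v ≠ i}

/-- Iterated mutation along a list of vertices. -/
noncomputable def mutateSeq : (Q : Quiv) → List Q.V → Quiv
  | Q, [] => Q
  | Q, i :: l => mutateSeq (Q.mutate i) l
termination_by _ l => l.length
decreasing_by exact Nat.lt_succ_self _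

/-- Isomorphism (relabeling of vertices) of quivers. -/
def Iso (Q Q' : Quiv) : Prop :=
  ∃ e : Q.V ≃ Q'.V, ∀ a b, Q'.B (e a) (e b) = Q.B a b

/-- Mutation equivalence: `Q'` is obtained from `Q` by finitely many mutations,
up to relabeling of vertices. -/
def MutEquiv (Q Q' : Quiv) : Prop := ∃ l : List Q.V, Iso (Q.mutateSeq l) Q'

/-- `Q` is a triangular extension of `Q₁` and `Q₂`: `V(Q) = V(Q₁) ⊔ V(Q₂)`,
`Q₁` and `Q₂` are induced subquivers, and all remaining arrows go from
`V(Q₁)` to `V(Q₂)`. -/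
def IsTriExt (Q Q₁ Q₂ : Quiv) : Prop :=
  ∃ e : Q.V ≃ (Q₁.V ⊕ Q₂.V),
    (∀ a b : Q₁.V, Q.B (e.symm (Sum.inl a)) (e.symm (Sum.inl b)) = Q₁.B a b) ∧
    (∀ a b : Q₂.V, Q.B (e.symm (Sum.inr a)) (e.symm (Sum.inr b)) = Q₂.B a b) ∧
    (∀ (a : Q₁.V) (b : Q₂.V), 0 ≤ Q.B (e.symm (Sum.inl a)) (e.symm (Sum.inr b)))

/-- A covering pair: an arrow `i → j` which is not part of any bi-infinite path. -/
def CoveringPair (Q : Quiv) (i j : Q.V) : Prop :=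
  Q.Arrow i j ∧
    ¬ ∃ f : ℤ → Q.V, (∀ a : ℤ, Q.Arrow (f a) (f (a + 1))) ∧ ∃ a, f a = i ∧ f (a + 1) = j

end Quiv

/-- The class of Banff quivers: the smallest class of quivers containing all acyclic
quivers, closed under mutation equivalence, and containing any quiver `Q` with a
covering pair `(i, j)` such that both `Q ∖ {i}` and `Q ∖ {j}` are in the class. -/
inductive Banff : Quiv → Prop
  | acyclic (Q : Quiv) : Q.Acyclic → Banff Q
  | mutEquiv (Q Q' : Quiv) : Banff Q → Q.MutEquiv Q' → Banff Q'
  | cover (Q : Quiv) (i j : Q.V) : Q.CoveringPair i j →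
      Banff (Q.delete i) → Banff (Q.delete j) → Banff Q

/-!
A covering pair `i → j` splits `Q` into the set `B` of vertices reachable from `j` and its
complement `A`. Since `B` is closed under arrows, every arrow between `A` and `B` points into
`B`, so `Q` is a triangular extension of `Q|_A` and `Q|_B`. If `i` were in `B`, the cycle
`i → j ⇝ i` traversed forever in both directions would be a bi-infinite path through `i → j`;
hence `A ∌ j` and `B ∌ i`, i.e. `Q|_A` and `Q|_B` are induced subquivers of `Q ∖ {j}` and
`Q ∖ {i}`, and induction on the Banff class finishes the proof.
-/

open Relation Function

theorem Acc.not_rel_self {α : Sort*} {r : α → α → Prop} {a : α} (h : Acc r a) : ¬r a a :=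
  h.rec fun _ _ ih hr => ih _ hr hr

theorem Relation.TransGen.not_acc {α : Type*} {r : α → α → Prop} {a : α}
    (h : TransGen r a a) : ¬Acc r a :=
  fun hacc => hacc.transGen.not_rel_self h

theorem exists_int_chain_of_not_acc {α : Type*} {r : α → α → Prop} {x y : α} (hxy : r x y)
    (hx : ¬Acc r x) (hy : ¬Acc (swap r) y) :
    ∃ f : ℤ → α, (∀ a, r (f a) (f (a + 1))) ∧ f 0 = x ∧ f 1 = y := by
  obtain ⟨b, hb0, hb⟩ := not_acc_iff_exists_descending_chain.mp hx
  obtain ⟨g, hg0, hg⟩ := not_acc_iff_exists_descending_chain.mp hy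
  refine ⟨fun a => if 0 < a then g (a - 1).toNat else b (-a).toNat, fun a => ?_,
    by simp [hb0], by simp [hg0]⟩
  rcases lt_trichotomy a 0 with ha | rfl | ha
  · have hsucc : (-a).toNat = (-(a + 1)).toNat + 1 := by omega
    dsimp only
    rw [if_neg (by omega), if_neg (by omega), hsucc]
    exact hb _
  · simpa [hb0, hg0] using hxy
  · have hsucc : (a + 1 - 1).toNat = (a - 1).toNat + 1 := by omega
    dsimp only
    rw [if_pos ha, if_pos (by omega), hsucc]
    exact hg _

theorem exists_int_chain_of_reflTransGen {α : Type*} {r : α → α → Prop} {x y : α}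
    (hxy : r x y) (hyx : ReflTransGen r y x) :
    ∃ f : ℤ → α, (∀ a, r (f a) (f (a + 1))) ∧ f 0 = x ∧ f 1 = y :=
  exists_int_chain_of_not_acc hxy (TransGen.head' hxy hyx).not_acc
    (transGen_swap.mpr (TransGen.tail' hyx hxy)).not_acc

namespace Quiv

theorem arrow_of_neg {Q : Quiv} {i j : Q.V} (h : Q.B i j < 0) : Q.Arrow j i := by
  rw [Arrow, Q.skew]
  omega

theorem CoveringPair.not_reflTransGen {Q : Quiv} {i j : Q.V} (h : Q.CoveringPair i j) :
    ¬ReflTransGen Q.Arrow j i := fun hji =>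
  h.2 <| (exists_int_chain_of_reflTransGen h.1 hji).imp fun _ ⟨hf, hf0, hf1⟩ =>
    ⟨hf, 0, hf0, by simpa using hf1⟩

theorem mutEquiv_of_iso {Q Q' : Quiv} (h : Q.Iso Q') : Q.MutEquiv Q' :=
  ⟨[], by rwa [mutateSeq]⟩

theorem iso_restrict_restrict (Q : Quiv) {S T : Set Q.V} (hST : S ⊆ T) :
    ((Q.restrict T).restrict (Subtype.val ⁻¹' S)).Iso (Q.restrict S) :=
  ⟨⟨fun v => ⟨v.1.1, v.2⟩, fun v => ⟨⟨v.1, hST v.2⟩, v.2⟩, fun _ => rfl, fun _ => rfl⟩,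
   fun _ _ => rfl⟩

theorem isTriExt_restrict_compl (Q : Quiv) {S : Set Q.V}
    (hS : ∀ ⦃v w⦄, v ∈ S → Q.Arrow v w → w ∈ S) :
    Q.IsTriExt (Q.restrict Sᶜ) (Q.restrict S) := by
  classical
  refine ⟨((Equiv.sumCompl (· ∈ S)).symm.trans (Equiv.sumComm _ _)), fun _ _ => rfl,
    fun _ _ => rfl, fun a b => ?_⟩
  by_contra hneg
  exact a.2 (hS b.2 (arrow_of_neg (not_le.mp hneg)))

end Quiv

/-- Every Banff quiver admits a reddening sequence (abstract version): if a class
`R` of quivers contains all acyclic quivers, is closed under mutation equivalence,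
is closed under passing to induced subquivers, and is closed under triangular
extensions, then every Banff quiver is in `R`. -/
theorem banff_in_reddening_class
    (R : Quiv → Prop)
    (hAcyclic : ∀ Q : Quiv, Q.Acyclic → R Q)
    (hMutEquiv : ∀ Q Q' : Quiv, R Q → Q.MutEquiv Q' → R Q')
    (hInduced : ∀ (Q : Quiv) (S : Set Q.V), R Q → R (Q.restrict S))
    (hTri : ∀ Q Q₁ Q₂ : Quiv, Q.IsTriExt Q₁ Q₂ → R Q₁ → R Q₂ → R Q) :
    ∀ Q : Quiv, Banff Q → R Q := by
  have restrict_of_subset {Q : Quiv} {S T : Set Q.V} (hST : S ⊆ T) (hT : R (Q.restrict T)) :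
      R (Q.restrict S) :=
    hMutEquiv _ _ (hInduced _ _ hT) (Quiv.mutEquiv_of_iso (Q.iso_restrict_restrict hST))
  intro Q hQ
  induction hQ with
  | acyclic Q hQ => exact hAcyclic Q hQ
  | mutEquiv Q Q' _ hQQ' ih => exact hMutEquiv Q Q' ih hQQ'
  | cover Q i j hij _ _ ihi ihj =>
    let reach : Set Q.V := {v | ReflTransGen Q.Arrow j v}
    have hi : i ∉ reach := hij.not_reflTransGen
    have hreach : ∀ ⦃v w⦄, v ∈ reach → Q.Arrow v w → w ∈ reach := fun _ _ => ReflTransGen.tail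
    refine hTri Q _ _ (Q.isTriExt_restrict_compl hreach) ?_ ?_
    · exact restrict_of_subset (T := {v | v ≠ j}) (fun v hv hvj => hv (hvj ▸ .refl)) ihj
    · exact restrict_of_subset (T := {v | v ≠ i}) (fun v hv hvi => hi (hvi ▸ hv)) ihi
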